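/- arXiv:1705.09654 — 2 statements merged into one kernel-verified Lean document; each statement's English description precedes it below -/
import Mathlib

section
/- Let (α, λ) be an S-module structure on a semilattice of abelian groups A. Every 1-cocycle f ∈ Z¹(S¹, A¹) is order-preserving and satisfies f(e) = α(e) for every idempotent e ∈ E(S); hence Z¹_≤(S¹, A¹) = Z¹(S¹, A¹). -/
/-- An inverse semigroup: every element has a unique (generalized) inverse. -/
class InverseSemigroup (S : Type*) extends Semigroup S, Inv S where
  mul_inv_mul : ∀ a : S, a * a⁻¹ * a = a
  inv_mul_inv : ∀ a : S, a⁻¹ * a * a⁻¹ = a⁻¹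
  inv_unique : ∀ a b : S, a * b * a = a → b * a * b = b → b = a⁻¹

/-- `e` is an idempotent. -/
def IsIdem {S : Type*} [Mul S] (e : S) : Prop := e * e = e

/-- The natural partial order on an inverse semigroup: `a ≤ b` iff `a = e * b`
for some idempotent `e`. -/
def NatLe {S : Type*} [Mul S] (a b : S) : Prop := ∃ e, IsIdem e ∧ a = e * b

/-- An `S`-module structure `(α, λ)` on a semilattice of abelian groups `A`
(modelled as a commutative inverse semigroup): `α` is an isomorphism
`E(S) → E(A)` and `lam` is a homomorphism of `S` into endomorphisms of `A`
satisfying `λ_e(a) = α(e)a` and `λ_s(α(e)) = α(s e s⁻¹)`. -/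
structure SMod (S A : Type*) [InverseSemigroup S] [InverseSemigroup A] where
  α : S → A
  lam : S → A → A
  α_idem : ∀ e : S, IsIdem e → IsIdem (α e)
  α_mul : ∀ e f : S, IsIdem e → IsIdem f → α (e * f) = α e * α f
  α_inj : ∀ e f : S, IsIdem e → IsIdem f → α e = α f → e = f
  α_surj : ∀ g : A, IsIdem g → ∃ e : S, IsIdem e ∧ α e = g
  lam_mul : ∀ (s : S) (a b : A), lam s (a * b) = lam s a * lam s b
  lam_idem : ∀ e : S, IsIdem e → ∀ a : A, lam e a = α e * a
  lam_alpha : ∀ (s e : S), IsIdem e → lam s (α e) = α (s * e * s⁻¹)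
  lam_comp : ∀ (s t : S) (a : A), lam s (lam t a) = lam (s * t) a

section InvAux
variable {T : Type*} [InverseSemigroup T]
open InverseSemigroup

theorem isIdem_inv_mul (a : T) : IsIdem (a⁻¹ * a) := by
  show a⁻¹ * a * (a⁻¹ * a) = a⁻¹ * a
  rw [← mul_assoc, inv_mul_inv]

theorem isIdem_mul_inv (a : T) : IsIdem (a * a⁻¹) := by
  show a * a⁻¹ * (a * a⁻¹) = a * a⁻¹
  rw [← mul_assoc, mul_inv_mul]

theorem inv_idem {e : T} (he : IsIdem e) : e⁻¹ = e := by
  have h : e * e * e = e := by rw [he, he]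
  exact (inv_unique e e h h).symm

theorem inv_inv' (a : T) : a⁻¹⁻¹ = a :=
  (inv_unique a⁻¹ a (inv_mul_inv a) (mul_inv_mul a)).symm

theorem idem_mul {e g : T} (he : IsIdem e) (hg : IsIdem g) : IsIdem (e * g) := by
  have he' : ∀ z : T, e * (e * z) = e * z := fun z => by rw [← mul_assoc, he]
  have hg' : ∀ z : T, g * (g * z) = g * z := fun z => by rw [← mul_assoc, hg]
  set x := (e * g)⁻¹ with hxdef
  have h1 : e * g * x * (e * g) = e * g := mul_inv_mul _
  have h2 : x * (e * g) * x = x := inv_mul_inv _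
  simp only [mul_assoc] at h1
  have h2' : ∀ z : T, x * (e * (g * (x * z))) = x * z := fun z => by
    conv_rhs => rw [← h2]
    simp only [mul_assoc]
  have key : g * x * e = x := by
    refine inv_unique (e * g) (g * x * e) ?_ ?_
    · simp only [mul_assoc]
      rw [hg', he']
      exact h1
    · simp only [mul_assoc]
      rw [he', hg', h2' e]
  have hx : IsIdem x := by
    show x * x = x
    calc x * x = g * x * e * (g * x * e) := by rw [key]
      _ = g * (x * (e * (g * (x * e)))) := by simp only [mul_assoc]
      _ = g * (x * e) := by rw [h2' e]
      _ = x := by rw [← mul_assoc, key]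
  have hef : e * g = x := by
    rw [← inv_idem hx, hxdef]
    exact (inv_inv' _).symm
  rw [hef]; exact hx

theorem idem_comm {e g : T} (he : IsIdem e) (hg : IsIdem g) : e * g = g * e := by
  have he' : ∀ z : T, e * (e * z) = e * z := fun z => by rw [← mul_assoc, he]
  have hg' : ∀ z : T, g * (g * z) = g * z := fun z => by rw [← mul_assoc, hg]
  have heg : e * g * (e * g) = e * g := idem_mul he hg
  have hge : g * e * (g * e) = g * e := idem_mul hg he
  simp only [mul_assoc] at heg hge
  have : g * e = (e * g)⁻¹ := by
    refine inv_unique (e * g) (g * e) ?_ ?_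
    · simp only [mul_assoc]
      rw [hg', he']
      exact heg
    · simp only [mul_assoc]
      rw [he', hg']
      exact hge
  rw [this, inv_idem (idem_mul he hg)]

theorem mul_inv_rev' (s t : T) : (s * t)⁻¹ = t⁻¹ * s⁻¹ := by
  have comm1 : t * t⁻¹ * (s⁻¹ * s) = s⁻¹ * s * (t * t⁻¹) :=
    idem_comm (isIdem_mul_inv t) (isIdem_inv_mul s)
  have mt : t * (t⁻¹ * t) = t := by rw [← mul_assoc, mul_inv_mul]
  have ms : ∀ z : T, s * (s⁻¹ * (s * z)) = s * z := fun z => by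
    conv_rhs => rw [← mul_inv_mul s]
    simp only [mul_assoc]
  have mt2 : ∀ z : T, t⁻¹ * (t * (t⁻¹ * z)) = t⁻¹ * z := fun z => by
    conv_rhs => rw [← inv_mul_inv t]
    simp only [mul_assoc]
  have ms2 : s⁻¹ * (s * s⁻¹) = s⁻¹ := by rw [← mul_assoc, inv_mul_inv]
  refine (inv_unique (s * t) (t⁻¹ * s⁻¹) ?_ ?_).symm
  · have h : s * (t * t⁻¹ * (s⁻¹ * s) * t) = s * (s⁻¹ * s * (t * t⁻¹) * t) := by rw [comm1]
    simp only [mul_assoc] at h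
    simp only [mul_assoc]
    rw [h, mt, ms t]
  · have h : t⁻¹ * (s⁻¹ * s * (t * t⁻¹) * s⁻¹) = t⁻¹ * (t * t⁻¹ * (s⁻¹ * s) * s⁻¹) := by
      rw [comm1]
    simp only [mul_assoc] at h
    simp only [mul_assoc]
    rw [h, ms2, mt2 s⁻¹]

end InvAux

/-- Every 1-cocycle `f ∈ Z¹(S¹,A¹)` satisfies `f(e) = α(e)` on idempotents and
is order-preserving; hence `Z¹_≤(S¹,A¹) = Z¹(S¹,A¹)`. -/
theorem stmt7 {S A : Type*} [InverseSemigroup S] [InverseSemigroup A]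
    (hA : ∀ a b : A, a * b = b * a) (M : SMod S A) (f : S → A)
    (hmem : ∀ s : S, f s * (f s)⁻¹ = M.α (s * s⁻¹))
    (hcoc : ∀ s t : S, M.lam s (f t) * (f (s * t))⁻¹ * f s = M.α (s * t * t⁻¹ * s⁻¹)) :
    (∀ e : S, IsIdem e → f e = M.α e) ∧
    (∀ s t : S, NatLe s t → NatLe (f s) (f t)) := by
  have part1 : ∀ e : S, IsIdem e → f e = M.α e := by
    intro e he
    have he' : e * e = e := he
    have hie : e⁻¹ = e := inv_idem he
    have h1 : f e * (f e)⁻¹ = M.α e := by rw [hmem e, hie, he']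
    have h := hcoc e e
    rw [hie, he', he', he', M.lam_idem e he] at h
    rw [mul_assoc (M.α e), h1] at h
    have hg : M.α e * M.α e = M.α e := M.α_idem e he
    rw [hg] at h
    have h2 : M.α e * f e = f e := by
      rw [← h1]; exact InverseSemigroup.mul_inv_mul (f e)
    rw [← h2]; exact h
  refine ⟨part1, ?_⟩
  rintro s t ⟨e, he, rfl⟩
  letI : CommSemigroup A := { (inferInstance : Semigroup A) with mul_comm := hA }
  have hfe := part1 e he
  have h := hcoc e t
  rw [M.lam_idem e he, hfe] at h
  have hS : e * t * t⁻¹ * e⁻¹ = e * t * (e * t)⁻¹ := by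
    rw [mul_inv_rev', inv_idem he]
    simp only [mul_assoc]
  rw [hS, ← hmem (e * t)] at h
  have hx : f (e * t) = M.α e * f t * (f (e * t))⁻¹ * M.α e * f (e * t) := by
    rw [h, InverseSemigroup.mul_inv_mul]
  refine ⟨M.α e * ((f (e * t))⁻¹ * f (e * t)), ?_, ?_⟩
  · show M.α e * ((f (e * t))⁻¹ * f (e * t)) * (M.α e * ((f (e * t))⁻¹ * f (e * t)))
      = M.α e * ((f (e * t))⁻¹ * f (e * t))
    have hg : M.α e * M.α e = M.α e := M.α_idem e he
    have hi : (f (e * t))⁻¹ * f (e * t) * ((f (e * t))⁻¹ * f (e * t))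
        = (f (e * t))⁻¹ * f (e * t) := isIdem_inv_mul (f (e * t))
    calc M.α e * ((f (e * t))⁻¹ * f (e * t)) * (M.α e * ((f (e * t))⁻¹ * f (e * t)))
        = M.α e * M.α e * ((f (e * t))⁻¹ * f (e * t) * ((f (e * t))⁻¹ * f (e * t))) := by
          ac_rfl
      _ = M.α e * ((f (e * t))⁻¹ * f (e * t)) := by rw [hg, hi]
  · have hg : M.α e * M.α e = M.α e := M.α_idem e he
    have hgg : M.α e * (M.α e * ((f (e * t))⁻¹ * f (e * t)))
        = M.α e * ((f (e * t))⁻¹ * f (e * t)) := by rw [← mul_assoc, hg]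
    calc f (e * t) = M.α e * (M.α e * ((f (e * t))⁻¹ * f (e * t))) * f t := by
          conv_lhs => rw [hx]
          ac_rfl
      _ = M.α e * ((f (e * t))⁻¹ * f (e * t)) * f t := by rw [hgg]
end

section
/- Let S be an inverse semigroup, A a semilattice of abelian groups with S-module structure (α, λ), and f : E(S) → A with f(e) ∈ A_{α(e)} for all idempotents e. Then f satisfies λ_s(f(e)) = f(s e s⁻¹) for all s ∈ S and e ∈ E(S) if and only if f is order-preserving and λ_s(f(s⁻¹ s)) = f(s s⁻¹) for all s ∈ S. -/
section AuxIS
variable {S : Type*} [InverseSemigroup S]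

lemma is_mul_inv_mul (a : S) : a * a⁻¹ * a = a := InverseSemigroup.mul_inv_mul a
lemma is_inv_mul_inv (a : S) : a⁻¹ * a * a⁻¹ = a⁻¹ := InverseSemigroup.inv_mul_inv a

lemma is_inv_inv (a : S) : a⁻¹⁻¹ = a :=
  (InverseSemigroup.inv_unique a⁻¹ a (is_inv_mul_inv a) (is_mul_inv_mul a)).symm

lemma idem_inv {e : S} (he : IsIdem e) : e⁻¹ = e := by
  have h : e * e * e = e := by rw [he, he]
  exact (InverseSemigroup.inv_unique e e h h).symm

lemma idem_mul_mul {e : S} (he : IsIdem e) (x : S) : e * (e * x) = e * x := by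
  rw [← mul_assoc, he]

lemma idem_mul_s8 {e f : S} (he : IsIdem e) (hf : IsIdem f) : IsIdem (e * f) := by
  set b := (e * f)⁻¹ with hb
  have hbb : b * (e * (f * b)) = b := by
    have := is_inv_mul_inv (e * f)
    simpa [mul_assoc] using this
  have h1 : (e * f) * (f * b * e) * (e * f) = e * f := by
    calc (e*f) * (f*b*e) * (e*f)
        = e * (f * (f * (b * (e * (e * f))))) := by simp [mul_assoc]
      _ = e * (f * (b * (e * (e * f)))) := by rw [idem_mul_mul hf]
      _ = e * (f * (b * (e * f))) := by rw [idem_mul_mul he]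
      _ = e * f := by
          have := is_mul_inv_mul (e * f)
          simpa [mul_assoc] using this
  have h2 : (f * b * e) * (e * f) * (f * b * e) = f * b * e := by
    calc (f*b*e) * (e*f) * (f*b*e)
        = f * (b * (e * (e * (f * (f * (b * e)))))) := by simp [mul_assoc]
      _ = f * (b * (e * (f * (f * (b * e))))) := by rw [idem_mul_mul he]
      _ = f * (b * (e * (f * (b * e)))) := by rw [idem_mul_mul hf]
      _ = (f * (b * (e * (f * b)))) * e := by simp [mul_assoc]
      _ = (f * b) * e := by rw [hbb]
      _ = f * b * e := rfl
  have hb_eq : f * b * e = b := InverseSemigroup.inv_unique (e*f) (f*b*e) h1 h2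
  have hbidem : IsIdem b := by
    unfold IsIdem
    conv_lhs => rw [← hb_eq]
    calc (f*b*e) * (f*b*e) = (f * (b * (e * (f * b)))) * e := by simp [mul_assoc]
      _ = (f * b) * e := by rw [hbb]
      _ = b := hb_eq
  have : e * f = b := by
    have h := is_inv_inv (e * f)
    rw [← hb, idem_inv hbidem] at h
    exact h.symm
  rw [this]; exact hbidem

lemma idem_comm_s8 {e f : S} (he : IsIdem e) (hf : IsIdem f) : e * f = f * e := by
  have hef := idem_mul_s8 he hf
  have h1 : (e*f) * (f*e) * (e*f) = e*f := by
    calc (e*f) * (f*e) * (e*f)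
        = e * (f * (f * (e * (e * f)))) := by simp [mul_assoc]
      _ = e * (f * (e * (e * f))) := by rw [idem_mul_mul hf]
      _ = e * (f * (e * f)) := by rw [idem_mul_mul he]
      _ = (e * f) * (e * f) := by simp [mul_assoc]
      _ = e * f := hef
  have h2 : (f*e) * (e*f) * (f*e) = f*e := by
    calc (f*e) * (e*f) * (f*e)
        = f * (e * (e * (f * (f * e)))) := by simp [mul_assoc]
      _ = f * (e * (f * (f * e))) := by rw [idem_mul_mul he]
      _ = f * (e * (f * e)) := by rw [idem_mul_mul hf]
      _ = (f * e) * (f * e) := by simp [mul_assoc]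
      _ = f * e := idem_mul_s8 hf he
  have := InverseSemigroup.inv_unique (e*f) (f*e) h1 h2
  rw [idem_inv hef] at this
  exact this.symm

lemma idem_mul_inv (a : S) : IsIdem (a * a⁻¹) := by
  unfold IsIdem
  calc a * a⁻¹ * (a * a⁻¹) = (a * a⁻¹ * a) * a⁻¹ := by simp [mul_assoc]
    _ = a * a⁻¹ := by rw [is_mul_inv_mul]

lemma idem_inv_mul (a : S) : IsIdem (a⁻¹ * a) := by
  unfold IsIdem
  calc a⁻¹ * a * (a⁻¹ * a) = (a⁻¹ * a * a⁻¹) * a := by simp [mul_assoc]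
    _ = a⁻¹ * a := by rw [is_inv_mul_inv]

lemma is_mul_inv_rev (a b : S) : (a * b)⁻¹ = b⁻¹ * a⁻¹ := by
  have h1 : (a*b) * (b⁻¹*a⁻¹) * (a*b) = a*b := by
    calc (a*b) * (b⁻¹*a⁻¹) * (a*b)
        = a * ((b*b⁻¹) * (a⁻¹*a)) * b := by simp [mul_assoc]
      _ = a * ((a⁻¹*a) * (b*b⁻¹)) * b := by rw [idem_comm_s8 (idem_mul_inv b) (idem_inv_mul a)]
      _ = (a * a⁻¹ * a) * (b * b⁻¹ * b) := by simp [mul_assoc]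
      _ = a * b := by rw [is_mul_inv_mul, is_mul_inv_mul]
  have h2 : (b⁻¹*a⁻¹) * (a*b) * (b⁻¹*a⁻¹) = b⁻¹*a⁻¹ := by
    calc (b⁻¹*a⁻¹) * (a*b) * (b⁻¹*a⁻¹)
        = b⁻¹ * ((a⁻¹*a) * (b*b⁻¹)) * a⁻¹ := by simp [mul_assoc]
      _ = b⁻¹ * ((b*b⁻¹) * (a⁻¹*a)) * a⁻¹ := by rw [idem_comm_s8 (idem_inv_mul a) (idem_mul_inv b)]
      _ = (b⁻¹ * b * b⁻¹) * (a⁻¹ * a * a⁻¹) := by simp [mul_assoc]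
      _ = b⁻¹ * a⁻¹ := by rw [is_inv_mul_inv, is_inv_mul_inv]
  exact (InverseSemigroup.inv_unique (a*b) (b⁻¹*a⁻¹) h1 h2).symm

lemma conj_idem (s : S) {e : S} (he : IsIdem e) : IsIdem (s * e * s⁻¹) := by
  unfold IsIdem
  calc (s*e*s⁻¹) * (s*e*s⁻¹)
      = s * ((e * (s⁻¹*s)) * e) * s⁻¹ := by simp [mul_assoc]
    _ = s * (((s⁻¹*s) * e) * e) * s⁻¹ := by rw [idem_comm_s8 he (idem_inv_mul s)]
    _ = (s * s⁻¹ * s) * ((e * e) * s⁻¹) := by simp [mul_assoc]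
    _ = s * (e * s⁻¹) := by rw [is_mul_inv_mul, he]
    _ = s * e * s⁻¹ := by rw [mul_assoc]

end AuxIS

lemma lam_inv {S A : Type*} [InverseSemigroup S] [InverseSemigroup A]
    (M : SMod S A) (s : S) (a : A) : M.lam s a⁻¹ = (M.lam s a)⁻¹ := by
  apply InverseSemigroup.inv_unique
  · rw [← M.lam_mul, ← M.lam_mul, is_mul_inv_mul]
  · rw [← M.lam_mul, ← M.lam_mul, is_inv_mul_inv]

/-- Let `f : E(S) → A` with `f(e) ∈ A_{α(e)}`. Then `λ_s(f(e)) = f(s e s⁻¹)` for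
all `s` and idempotent `e` iff `f` is order-preserving and
`λ_s(f(s⁻¹ s)) = f(s s⁻¹)` for all `s`. -/
theorem stmt8 {S A : Type*} [InverseSemigroup S] [InverseSemigroup A]
    (hA : ∀ a b : A, a * b = b * a) (M : SMod S A) (f : S → A)
    (hmem : ∀ e : S, IsIdem e → f e * (f e)⁻¹ = M.α e) :
    (∀ (s e : S), IsIdem e → M.lam s (f e) = f (s * e * s⁻¹)) ↔
    ((∀ e e' : S, IsIdem e → IsIdem e' → NatLe e e' → NatLe (f e) (f e')) ∧
     (∀ s : S, M.lam s (f (s⁻¹ * s)) = f (s * s⁻¹))) := by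
  have key : ∀ a b g : A, IsIdem g → b = g * a → a * a⁻¹ = b * b⁻¹ → a = b := by
    intro a b g hg hba hd
    have hbb : b * b⁻¹ = g * (a * a⁻¹) := by
      rw [hba, is_mul_inv_rev, idem_inv hg]
      calc (g*a) * (a⁻¹*g) = g * ((a * a⁻¹) * g) := by simp [mul_assoc]
        _ = g * (g * (a * a⁻¹)) := by rw [hA (a*a⁻¹) g]
        _ = g * (a * a⁻¹) := idem_mul_mul hg _
    have haeq : a * a⁻¹ = g * (a * a⁻¹) := hd.trans hbb
    have : a = g * a := by
      conv_lhs => rw [← is_mul_inv_mul a, haeq]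
      rw [mul_assoc, is_mul_inv_mul]
    rw [hba]; exact this
  constructor
  · intro h
    constructor
    · rintro e e' he he' ⟨g, hg, rfl⟩
      have hee' : (g * e') * e' = g * e' := by rw [mul_assoc, he']
      have h1 := h (g * e') e' he'
      rw [idem_inv he, hee', he] at h1
      rw [M.lam_idem _ he] at h1
      exact ⟨M.α _, M.α_idem _ he, h1.symm⟩
    · intro s
      have h1 := h s (s⁻¹ * s) (idem_inv_mul s)
      rw [show s * (s⁻¹ * s) * s⁻¹ = s * s⁻¹ by rw [← mul_assoc, is_mul_inv_mul]] at h1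
      exact h1
  · rintro ⟨hord, hs⟩ s e he
    have hss : IsIdem (s⁻¹ * s) := idem_inv_mul s
    have he2 : IsIdem (e * (s⁻¹ * s)) := idem_mul_s8 he hss
    have hle : NatLe (e * (s⁻¹ * s)) e := ⟨s⁻¹ * s, hss, by
      rw [idem_comm_s8 he hss, mul_assoc]⟩
    obtain ⟨ε, hε, hfε⟩ := hord _ _ he2 he hle
    have hseinv : (s * e)⁻¹ = e * s⁻¹ := by rw [is_mul_inv_rev, idem_inv he]
    have hdom : (s * e)⁻¹ * (s * e) = e * (s⁻¹ * s) := by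
      rw [hseinv]
      calc e * s⁻¹ * (s * e) = (e * (s⁻¹ * s)) * e := by simp [mul_assoc]
        _ = ((s⁻¹ * s) * e) * e := by rw [idem_comm_s8 he hss]
        _ = (s⁻¹ * s) * (e * e) := by rw [mul_assoc]
        _ = (s⁻¹ * s) * e := by rw [he]
        _ = e * (s⁻¹ * s) := (idem_comm_s8 he hss).symm
    have hran : (s * e) * (s * e)⁻¹ = s * e * s⁻¹ := by
      rw [hseinv]
      calc (s * e) * (e * s⁻¹) = s * ((e * e) * s⁻¹) := by simp [mul_assoc]
        _ = s * (e * s⁻¹) := by rw [he]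
        _ = s * e * s⁻¹ := by rw [mul_assoc]
    have h2 := hs (s * e)
    rw [hdom, hran, ← M.lam_comp, M.lam_idem e he] at h2
    have h3 : M.α (e * (s⁻¹ * s)) * f (e * (s⁻¹ * s)) = f (e * (s⁻¹ * s)) := by
      rw [← hmem _ he2]; exact is_mul_inv_mul _
    have habs : M.α e * f (e * (s⁻¹ * s)) = f (e * (s⁻¹ * s)) := by
      calc M.α e * f (e * (s⁻¹ * s))
          = M.α e * (M.α (e * (s⁻¹ * s)) * f (e * (s⁻¹ * s))) := by rw [h3]
        _ = (M.α e * M.α (e * (s⁻¹ * s))) * f (e * (s⁻¹ * s)) := (mul_assoc _ _ _).symm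
        _ = M.α (e * (e * (s⁻¹ * s))) * f (e * (s⁻¹ * s)) := by
            rw [M.α_mul e _ he he2]
        _ = M.α (e * (s⁻¹ * s)) * f (e * (s⁻¹ * s)) := by rw [idem_mul_mul he]
        _ = f (e * (s⁻¹ * s)) := h3
    rw [habs, hfε, M.lam_mul] at h2
    have hg : IsIdem (M.lam s ε) := by unfold IsIdem; rw [← M.lam_mul, hε]
    have hd : M.lam s (f e) * (M.lam s (f e))⁻¹
        = f (s * e * s⁻¹) * (f (s * e * s⁻¹))⁻¹ := by
      rw [← lam_inv, ← M.lam_mul, hmem e he, M.lam_alpha s e he,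
        hmem _ (conj_idem s he)]
    exact key _ _ _ hg h2.symm hd
end
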